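/- Let 1 < p < s < ∞, 1/p+1/p'=1, 1/s+1/s'=1, and let u^K be the 0-1 indicator sequence of {1,…,K}. Then the ratio (∑_{n=1}^∞ u^K_n·u^K_n) / (‖u^K‖*_{p,s}·‖u^K‖*_{p',s'}) converges to s^{1/s}·(s')^{1/s'}/(p·p') as K → ∞. -/

import Mathlib

open Filter
open Finset Topology

lemma key_sum_eq {a : ℝ} (K : ℕ) :
    ∑ n ∈ Finset.Icc 1 K, (n : ℝ) ^ (a - 1)
      = ∑ i ∈ Finset.range K, ((i : ℝ) + 1) ^ (a - 1) := by
  rw [← Finset.Ico_add_one_right_eq_Icc, Finset.sum_Ico_eq_sum_range]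
  refine Finset.sum_congr (by norm_num) fun i _ => ?_
  push_cast; ring_nf

lemma aux_sum_low {a : ℝ} (ha : 0 < a) {K : ℕ} (hK : 1 ≤ K) :
    ((K : ℝ) ^ a - 1) / a ≤ ∑ n ∈ Finset.Icc 1 K, (n : ℝ) ^ (a - 1) := by
  rw [key_sum_eq]
  rcases le_or_gt 1 a with h1 | h1
  · -- monotone case: ∫_0^K ≤ sum
    have hmono : MonotoneOn (fun x : ℝ => x ^ (a - 1)) (Set.Icc (0:ℝ) (0 + K)) := by
      intro x hx y _ hxy
      exact Real.rpow_le_rpow hx.1 hxy (by linarith)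
    have := hmono.integral_le_sum
    rw [integral_rpow (Or.inl (by linarith))] at this
    have hval : ((0:ℝ) + K) ^ (a - 1 + 1) = (K:ℝ) ^ a := by rw [zero_add]; ring_nf
    rw [hval, Real.zero_rpow (by linarith : a - 1 + 1 ≠ 0)] at this
    have heq : ∑ i ∈ Finset.range K, ((0:ℝ) + ((i + 1 : ℕ) : ℝ)) ^ (a - 1)
        = ∑ i ∈ Finset.range K, ((i : ℝ) + 1) ^ (a - 1) := by
      refine Finset.sum_congr rfl fun i _ => ?_; push_cast; ring_nf
    rw [heq] at this
    calc ((K : ℝ) ^ a - 1) / a ≤ ((K : ℝ) ^ a - 0) / a := by gcongr <;> norm_num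
      _ ≤ _ := by simpa using this
  · -- antitone case: ∫_1^{1+K} ≤ sum
    have hanti : AntitoneOn (fun x : ℝ => x ^ (a - 1)) (Set.Icc (1:ℝ) (1 + K)) := by
      intro x hx y hy hxy
      exact Real.rpow_le_rpow_of_nonpos (lt_of_lt_of_le one_pos hx.1) hxy (by linarith)
    have := hanti.integral_le_sum
    rw [integral_rpow (Or.inl (by linarith))] at this
    have hval : ((1:ℝ) + K) ^ (a - 1 + 1) = ((K:ℝ) + 1) ^ a := by rw [add_comm]; ring_nf
    rw [hval, Real.one_rpow] at this
    have heq : ∑ i ∈ Finset.range K, ((1:ℝ) + (i : ℕ)) ^ (a - 1)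
        = ∑ i ∈ Finset.range K, ((i : ℝ) + 1) ^ (a - 1) := by
      refine Finset.sum_congr rfl fun i _ => ?_; push_cast; ring_nf
    rw [heq] at this
    refine le_trans ?_ this
    have hKle : (K : ℝ) ^ a ≤ ((K:ℝ) + 1) ^ a :=
      Real.rpow_le_rpow (Nat.cast_nonneg K) (by linarith) ha.le
    have : a - 1 + 1 = a := by ring
    rw [this]
    gcongr

lemma aux_sum_high {a : ℝ} (ha : 0 < a) {K : ℕ} (hK : 1 ≤ K) :
    ∑ n ∈ Finset.Icc 1 K, (n : ℝ) ^ (a - 1) ≤ ((K : ℝ) + 1) ^ a / a + 1 := by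
  rw [key_sum_eq]
  rcases le_or_gt 1 a with h1 | h1
  · -- monotone case: sum ≤ ∫_1^{1+K}
    have hmono : MonotoneOn (fun x : ℝ => x ^ (a - 1)) (Set.Icc (1:ℝ) (1 + K)) := by
      intro x hx y hy hxy
      exact Real.rpow_le_rpow (le_trans zero_le_one hx.1) hxy (by linarith)
    have := hmono.sum_le_integral
    rw [integral_rpow (Or.inl (by linarith))] at this
    have hval : ((1:ℝ) + K) ^ (a - 1 + 1) = ((K:ℝ) + 1) ^ a := by rw [add_comm]; ring_nf
    rw [hval, Real.one_rpow] at this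
    have heq : ∑ i ∈ Finset.range K, ((1:ℝ) + (i : ℕ)) ^ (a - 1)
        = ∑ i ∈ Finset.range K, ((i : ℝ) + 1) ^ (a - 1) := by
      refine Finset.sum_congr rfl fun i _ => ?_; ring_nf
    rw [heq, show a - 1 + 1 = a by ring] at this
    refine le_trans this ?_
    have h1a : (0:ℝ) < ((K:ℝ)+1)^a := Real.rpow_pos_of_pos (by positivity) a
    rw [sub_div]
    have : 1 / a ≤ 1 := by
      rw [div_le_one ha]; exact h1
    linarith [one_div_pos.mpr ha]
  · -- antitone case: sum = f 1 + rest, rest ≤ ∫_1^{1+(K-1)}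
    obtain ⟨M, rfl⟩ : ∃ M, K = M + 1 := ⟨K - 1, (Nat.succ_pred_eq_of_pos hK).symm⟩
    rw [Finset.sum_range_succ']
    have hanti : AntitoneOn (fun x : ℝ => x ^ (a - 1)) (Set.Icc (1:ℝ) (1 + M)) := by
      intro x hx y hy hxy
      exact Real.rpow_le_rpow_of_nonpos (lt_of_lt_of_le one_pos hx.1) hxy (by linarith)
    have := hanti.sum_le_integral
    rw [integral_rpow (Or.inl (by linarith))] at this
    have hval : ((1:ℝ) + M) ^ (a - 1 + 1) = ((M:ℝ) + 1) ^ a := by rw [add_comm]; ring_nf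
    rw [hval, Real.one_rpow] at this
    have heq : ∑ i ∈ Finset.range M, ((1:ℝ) + ((i + 1 : ℕ) : ℝ)) ^ (a - 1)
        = ∑ i ∈ Finset.range M, (((i:ℝ) + 1) + 1) ^ (a - 1) := by
      refine Finset.sum_congr rfl fun i _ => ?_; push_cast; ring_nf
    rw [heq] at this
    have hMle : ((M : ℝ) + 1) ^ a ≤ ((M:ℝ) + 1 + 1) ^ a :=
      Real.rpow_le_rpow (by positivity) (by linarith) ha.le
    have h0 : ((0:ℝ) + 1) ^ (a - 1) = 1 := by norm_num
    push_cast
    rw [h0]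
    rw [show a - 1 + 1 = a by ring] at this
    have hfin : ∑ i ∈ Finset.range M, (((i:ℝ) + 1) + 1) ^ (a - 1)
        ≤ ((M:ℝ) + 1 + 1) ^ a / a := by
      refine le_trans this ?_
      have hdd : ((M:ℝ) + 1) ^ a / a ≤ ((M:ℝ) + 1 + 1) ^ a / a := by gcongr
      have : (0:ℝ) < 1 / a := one_div_pos.mpr ha
      rw [sub_div]
      linarith
    linarith

lemma natCast_tendsto : Tendsto (fun K : ℕ => (K : ℝ)) atTop atTop :=
  tendsto_natCast_atTop_atTop

lemma rpow_nat_tendsto {a : ℝ} (ha : 0 < a) :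
    Tendsto (fun K : ℕ => (K : ℝ) ^ a) atTop atTop :=
  (tendsto_rpow_atTop ha).comp natCast_tendsto

lemma inv_rpow_tendsto {a : ℝ} (ha : 0 < a) :
    Tendsto (fun K : ℕ => ((K : ℝ) ^ a)⁻¹) atTop (𝓝 0) :=
  (rpow_nat_tendsto ha).inv_tendsto_atTop

lemma ratio_rpow_tendsto {a : ℝ} (ha : 0 < a) :
    Tendsto (fun K : ℕ => ((K : ℝ) + 1) ^ a / (K : ℝ) ^ a) atTop (𝓝 1) := by
  have h1 : Tendsto (fun K : ℕ => (1 + 1 / (K : ℝ)) ^ a) atTop (𝓝 1) := by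
    have : Tendsto (fun K : ℕ => 1 + 1 / (K : ℝ)) atTop (𝓝 1) := by
      have := (tendsto_one_div_atTop_nhds_zero_nat : Tendsto (fun n : ℕ => 1 / (n : ℝ)) atTop (𝓝 0))
      simpa using (tendsto_const_nhds.add this)
    have := this.rpow_const (Or.inr ha.le)
    simpa using this
  refine h1.congr' ?_
  filter_upwards [eventually_ge_atTop 1] with K hK
  have hK0 : (0:ℝ) < K := by exact_mod_cast hK
  rw [show (1 : ℝ) + 1 / (K:ℝ) = ((K:ℝ) + 1) / K by field_simp,
    Real.div_rpow (by positivity) (Nat.cast_nonneg K)]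

lemma sum_tendsto {a : ℝ} (ha : 0 < a) :
    Tendsto (fun K : ℕ => (∑ n ∈ Finset.Icc 1 K, (n : ℝ) ^ (a - 1)) / (K : ℝ) ^ a)
      atTop (𝓝 (1 / a)) := by
  have hg : Tendsto (fun K : ℕ => (1 - ((K : ℝ) ^ a)⁻¹) / a) atTop (𝓝 (1 / a)) := by
    have := ((tendsto_const_nhds : Tendsto (fun _ : ℕ => (1:ℝ)) atTop (𝓝 1)).sub
      (inv_rpow_tendsto ha)).div_const a
    simpa using this
  have hh : Tendsto (fun K : ℕ => (((K : ℝ) + 1) ^ a / (K : ℝ) ^ a) / a + ((K : ℝ) ^ a)⁻¹)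
      atTop (𝓝 (1 / a)) := by
    have := ((ratio_rpow_tendsto ha).div_const a).add (inv_rpow_tendsto ha)
    simpa using this
  refine tendsto_of_tendsto_of_tendsto_of_le_of_le' hg hh ?_ ?_
  · filter_upwards [eventually_ge_atTop 1] with K hK
    have hK0 : (0:ℝ) < K := by exact_mod_cast hK
    have hx : (0:ℝ) < (K : ℝ) ^ a := Real.rpow_pos_of_pos hK0 a
    have h2 : (((K : ℝ) ^ a - 1) / a) / (K : ℝ) ^ a
        ≤ (∑ n ∈ Finset.Icc 1 K, (n : ℝ) ^ (a - 1)) / (K : ℝ) ^ a := by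
      gcongr
      exact aux_sum_low ha hK
    have hxne : ((K:ℝ) ^ a) ≠ 0 := ne_of_gt hx
    have hane : a ≠ 0 := ne_of_gt ha
    have hEq : (1 - ((K : ℝ) ^ a)⁻¹) / a = (((K : ℝ) ^ a - 1) / a) / (K : ℝ) ^ a := by
      rw [div_div, div_eq_div_iff hane (mul_ne_zero hane hxne)]
      field_simp
    rw [hEq]; exact h2
  · filter_upwards [eventually_ge_atTop 1] with K hK
    have hK0 : (0:ℝ) < K := by exact_mod_cast hK
    have hx : (0:ℝ) < (K : ℝ) ^ a := Real.rpow_pos_of_pos hK0 a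
    have h2 : (∑ n ∈ Finset.Icc 1 K, (n : ℝ) ^ (a - 1)) / (K : ℝ) ^ a
        ≤ (((K : ℝ) + 1) ^ a / a + 1) / (K : ℝ) ^ a := by
      gcongr
      exact aux_sum_high ha hK
    have hxne : ((K:ℝ) ^ a) ≠ 0 := ne_of_gt hx
    have hane : a ≠ 0 := ne_of_gt ha
    have hEq : (((K : ℝ) + 1) ^ a / a + 1) / (K : ℝ) ^ a
        = (((K : ℝ) + 1) ^ a / (K : ℝ) ^ a) / a + ((K : ℝ) ^ a)⁻¹ := by
      rw [div_div, div_add' _ _ _ (mul_ne_zero hxne hane), div_eq_div_iff hxne (mul_ne_zero hxne hane)]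
      field_simp
    rw [← hEq] at *
    exact h2

set_option maxHeartbeats 1000000 in
lemma tail_summable {b : ℝ} (hb : 0 < b) (K : ℕ) :
    Summable (fun j : ℕ => ((j + K + 1 : ℕ) : ℝ) ^ (-b - 1)) := by
  have hg : Summable (fun n : ℕ => (n : ℝ) ^ (-b - 1)) :=
    Real.summable_nat_rpow.mpr (by linarith)
  have h2 : Summable (fun j : ℕ => ((j + (K + 1) : ℕ) : ℝ) ^ (-b - 1)) :=
    (summable_nat_add_iff (K + 1)).mpr hg
  exact h2.congr fun j => by rw [← Nat.add_assoc]

lemma tail_high {b : ℝ} (hb : 0 < b) {K : ℕ} (hK : 1 ≤ K) :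
    (∑' j : ℕ, ((j + K + 1 : ℕ) : ℝ) ^ (-b - 1)) ≤ (K : ℝ) ^ (-b) / b := by
  have hK0 : (0:ℝ) < K := by exact_mod_cast hK
  refine Real.tsum_le_of_sum_range_le (fun n => Real.rpow_nonneg (Nat.cast_nonneg _) _) ?_
  intro N
  have hanti : AntitoneOn (fun x : ℝ => x ^ (-b - 1)) (Set.Icc ((K:ℝ)) ((K:ℝ) + N)) := by
    intro x hx y hy hxy
    exact Real.rpow_le_rpow_of_nonpos (lt_of_lt_of_le hK0 hx.1) hxy (by linarith)
  have hint := hanti.sum_le_integral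
  have hmem : (0:ℝ) ∉ Set.uIcc (K:ℝ) ((K:ℝ) + N) := by
    rw [Set.uIcc_of_le (le_add_of_nonneg_right (Nat.cast_nonneg N))]
    intro h
    exact absurd h.1 (by linarith)
  rw [integral_rpow (Or.inr ⟨by linarith, hmem⟩)] at hint
  have heq : ∑ i ∈ Finset.range N, ((K:ℝ) + ((i + 1 : ℕ) : ℝ)) ^ (-b - 1)
      = ∑ i ∈ Finset.range N, ((i + K + 1 : ℕ) : ℝ) ^ (-b - 1) := by
    refine Finset.sum_congr rfl fun i _ => ?_; push_cast; ring_nf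
  rw [heq] at hint
  refine le_trans hint ?_
  rw [show -b - 1 + 1 = -b by ring]
  have h1 : (0:ℝ) ≤ ((K:ℝ) + N) ^ (-b) := Real.rpow_nonneg (by positivity) _
  have hbne : b ≠ 0 := ne_of_gt hb
  rw [show (((K:ℝ) + N) ^ (-b) - (K:ℝ) ^ (-b)) / (-b)
      = ((K:ℝ) ^ (-b) - ((K:ℝ) + N) ^ (-b)) / b from by
    rw [div_eq_div_iff (neg_ne_zero.mpr hbne) hbne]; ring]
  gcongr
  linarith

lemma tail_low {b : ℝ} (hb : 0 < b) {K : ℕ} (hK : 1 ≤ K) :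
    ((K : ℝ) + 1) ^ (-b) / b ≤ ∑' j : ℕ, ((j + K + 1 : ℕ) : ℝ) ^ (-b - 1) := by
  have hK0 : (0:ℝ) < K := by exact_mod_cast hK
  have hS := (tail_summable hb K).hasSum.tendsto_sum_nat
  have hL : Tendsto (fun N : ℕ => (((K:ℝ) + 1) ^ (-b) - ((K:ℝ) + 1 + N) ^ (-b)) / b)
      atTop (𝓝 (((K : ℝ) + 1) ^ (-b) / b)) := by
    have h0 : Tendsto (fun N : ℕ => ((K:ℝ) + 1 + N) ^ (-b)) atTop (𝓝 0) := by
      exact (tendsto_rpow_neg_atTop hb).comp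
        (tendsto_atTop_add_const_left _ _ natCast_tendsto)
    have := ((tendsto_const_nhds : Tendsto (fun _ : ℕ => ((K:ℝ) + 1) ^ (-b)) atTop
      (𝓝 (((K:ℝ) + 1) ^ (-b)))).sub h0).div_const b
    simpa using this
  refine le_of_tendsto_of_tendsto' hL hS fun N => ?_
  have hanti : AntitoneOn (fun x : ℝ => x ^ (-b - 1)) (Set.Icc ((K:ℝ)+1) ((K:ℝ)+1+N) ) := by
    intro x hx y hy hxy
    exact Real.rpow_le_rpow_of_nonpos (by linarith [hx.1]) hxy (by linarith)
  have hint := hanti.integral_le_sum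
  have hmem : (0:ℝ) ∉ Set.uIcc ((K:ℝ)+1) ((K:ℝ)+1+N) := by
    rw [Set.uIcc_of_le (le_add_of_nonneg_right (Nat.cast_nonneg N))]
    intro h
    exact absurd h.1 (by linarith)
  rw [integral_rpow (Or.inr ⟨by linarith, hmem⟩)] at hint
  have heq : ∑ i ∈ Finset.range N, ((K:ℝ) + 1 + (i : ℕ)) ^ (-b - 1)
      = ∑ i ∈ Finset.range N, ((i + K + 1 : ℕ) : ℝ) ^ (-b - 1) := by
    refine Finset.sum_congr rfl fun i _ => ?_; push_cast; ring_nf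
  rw [heq, show -b - 1 + 1 = -b by ring] at hint
  refine le_trans (le_of_eq ?_) hint
  have hbne : b ≠ 0 := ne_of_gt hb
  rw [show ((((K:ℝ) + 1 + N) ^ (-b) - ((K:ℝ) + 1) ^ (-b)) / (-b))
      = ((((K:ℝ) + 1) ^ (-b) - ((K:ℝ) + 1 + N) ^ (-b)) / b) from by
    rw [div_eq_div_iff (neg_ne_zero.mpr hbne) hbne]; ring]

lemma tail_tendsto {b : ℝ} (hb : 0 < b) :
    Tendsto (fun K : ℕ => (K : ℝ) ^ b * ∑' j : ℕ, ((j + K + 1 : ℕ) : ℝ) ^ (-b - 1))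
      atTop (𝓝 (1 / b)) := by
  have hg : Tendsto (fun K : ℕ => ((K : ℝ) ^ b / ((K : ℝ) + 1) ^ b) / b) atTop (𝓝 (1 / b)) := by
    have h1 := ((ratio_rpow_tendsto hb).inv₀ one_ne_zero).div_const b
    simp only [inv_div, inv_one] at h1
    exact h1
  refine tendsto_of_tendsto_of_tendsto_of_le_of_le' hg tendsto_const_nhds ?_ ?_
  · filter_upwards [eventually_ge_atTop 1] with K hK
    have hK0 : (0:ℝ) < K := by exact_mod_cast hK
    have hb1 : (0:ℝ) < (K:ℝ) ^ b := Real.rpow_pos_of_pos hK0 b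
    have hb2 : (0:ℝ) < ((K:ℝ) + 1) ^ b := Real.rpow_pos_of_pos (by linarith) b
    have h2 : (K : ℝ) ^ b * (((K:ℝ) + 1) ^ (-b) / b)
        ≤ (K : ℝ) ^ b * ∑' j : ℕ, ((j + K + 1 : ℕ) : ℝ) ^ (-b - 1) :=
      mul_le_mul_of_nonneg_left (tail_low hb hK) hb1.le
    refine le_trans (le_of_eq ?_) h2
    rw [Real.rpow_neg (by linarith)]
    field_simp
  · filter_upwards [eventually_ge_atTop 1] with K hK
    have hK0 : (0:ℝ) < K := by exact_mod_cast hK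
    have hb1 : (0:ℝ) < (K:ℝ) ^ b := Real.rpow_pos_of_pos hK0 b
    have h2 : (K : ℝ) ^ b * ∑' j : ℕ, ((j + K + 1 : ℕ) : ℝ) ^ (-b - 1)
        ≤ (K : ℝ) ^ b * ((K:ℝ) ^ (-b) / b) :=
      mul_le_mul_of_nonneg_left (tail_high hb hK) hb1.le
    refine le_trans h2 (le_of_eq ?_)
    rw [Real.rpow_neg hK0.le]
    field_simp


theorem stmt16 (p s p' s' : ℝ) (hp : 1 < p) (hps : p < s)
    (hp' : 1 / p + 1 / p' = 1) (hs' : 1 / s + 1 / s' = 1) :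
    Tendsto
      (fun K : ℕ =>
        (K : ℝ) /
          ((∑ n ∈ Finset.Icc 1 K, (n : ℝ) ^ (s / p - 1) +
              (K : ℝ) ^ s * ∑' j : ℕ, ((j + K + 1 : ℕ) : ℝ) ^ (-(s / p') - 1)) ^ (1 / s) *
            (∑ n ∈ Finset.Icc 1 K, (n : ℝ) ^ (s' / p' - 1) +
              (K : ℝ) ^ s' * ∑' j : ℕ, ((j + K + 1 : ℕ) : ℝ) ^ (-(s' / p) - 1)) ^ (1 / s')))
      atTop (nhds (s ^ (1 / s) * s' ^ (1 / s') / (p * p'))) := by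
  have hp0 : 0 < p := lt_trans one_pos hp
  have hs1 : 1 < s := hp.trans hps
  have hs0 : 0 < s := lt_trans one_pos hs1
  have hp'0 : 0 < p' := by
    by_contra h
    push_neg at h
    have h1 : 1 / p' ≤ 0 := one_div_nonpos.mpr h
    have h2 : 1 / p < 1 := by rw [div_lt_one hp0]; exact hp
    linarith
  have hs'0 : 0 < s' := by
    by_contra h
    push_neg at h
    have h1 : 1 / s' ≤ 0 := one_div_nonpos.mpr h
    have h2 : 1 / s < 1 := by rw [div_lt_one hs0]; exact hs1
    linarith
  have hpp' : p + p' = p * p' := by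
    field_simp at hp'
    linarith
  have hss' : s + s' = s * s' := by
    field_simp at hs'
    linarith
  have hp'' : 1 / p + 1 / p' = 1 := by
    field_simp
    linarith
  have hs'' : 1 / s + 1 / s' = 1 := by
    field_simp
    linarith
  have e1 : s / p + s / p' = s := by
    have : s / p + s / p' = s * (1 / p + 1 / p') := by ring
    rw [this, hp'', mul_one]
  have e2 : s' / p' + s' / p = s' := by
    have : s' / p' + s' / p = s' * (1 / p + 1 / p') := by ring
    rw [this, hp'', mul_one]
  have e4 : s / p * (1 / s) = 1 / p := by
    field_simp
  have e5 : s' / p' * (1 / s') = 1 / p' := by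
    field_simp
  -- limits of the normalized factors
  have h1 := (sum_tendsto (show (0:ℝ) < s / p by positivity)).add
    (tail_tendsto (show (0:ℝ) < s / p' by positivity))
  have h2 := (sum_tendsto (show (0:ℝ) < s' / p' by positivity)).add
    (tail_tendsto (show (0:ℝ) < s' / p by positivity))
  rw [one_div_div, one_div_div, ← add_div,
    show p + p' = p * p' from hpp'] at h1
  rw [one_div_div, one_div_div, ← add_div,
    show p' + p = p * p' from by linarith] at h2
  have hF := (h1.rpow_const (Or.inr (by positivity : (0:ℝ) ≤ 1 / s))).mul
    (h2.rpow_const (Or.inr (by positivity : (0:ℝ) ≤ 1 / s')))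
  have hFpos : (0:ℝ) < (p * p' / s) ^ (1 / s) * (p * p' / s') ^ (1 / s') := by positivity
  have hFinv := hF.inv₀ (ne_of_gt hFpos)
  have hval : ((p * p' / s) ^ (1 / s) * (p * p' / s') ^ (1 / s'))⁻¹
      = s ^ (1 / s) * s' ^ (1 / s') / (p * p') := by
    rw [Real.div_rpow (by positivity) hs0.le, Real.div_rpow (by positivity) hs'0.le,
      div_mul_div_comm, ← Real.rpow_add (by positivity : (0:ℝ) < p * p'), hs'',
      Real.rpow_one, inv_div]
  rw [← hval]
  refine Tendsto.congr' ?_ hFinv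
  filter_upwards [eventually_ge_atTop 1] with K hK
  have hK0 : (0:ℝ) < K := by exact_mod_cast hK
  set S1 := ∑ n ∈ Finset.Icc 1 K, (n : ℝ) ^ (s / p - 1) with hS1
  set S2 := ∑ n ∈ Finset.Icc 1 K, (n : ℝ) ^ (s' / p' - 1) with hS2
  set T1 := ∑' j : ℕ, ((j + K + 1 : ℕ) : ℝ) ^ (-(s / p') - 1) with hT1
  set T2 := ∑' j : ℕ, ((j + K + 1 : ℕ) : ℝ) ^ (-(s' / p) - 1) with hT2
  have hT1n : 0 ≤ T1 := tsum_nonneg fun j => Real.rpow_nonneg (Nat.cast_nonneg _) _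
  have hT2n : 0 ≤ T2 := tsum_nonneg fun j => Real.rpow_nonneg (Nat.cast_nonneg _) _
  have hS1p : 0 < S1 := by
    refine Finset.sum_pos (fun n hn => ?_) ⟨1, by simp [hK]⟩
    have : 0 < (n:ℝ) := by
      have := (Finset.mem_Icc.mp hn).1
      exact_mod_cast lt_of_lt_of_le one_pos this
    exact Real.rpow_pos_of_pos this _
  have hS2p : 0 < S2 := by
    refine Finset.sum_pos (fun n hn => ?_) ⟨1, by simp [hK]⟩
    have : 0 < (n:ℝ) := by
      have := (Finset.mem_Icc.mp hn).1
      exact_mod_cast lt_of_lt_of_le one_pos this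
    exact Real.rpow_pos_of_pos this _
  have hr1 : (0:ℝ) < (K:ℝ) ^ (s / p) := Real.rpow_pos_of_pos hK0 _
  have hr2 : (0:ℝ) < (K:ℝ) ^ (s' / p') := Real.rpow_pos_of_pos hK0 _
  set G1 := S1 / (K:ℝ) ^ (s / p) + (K:ℝ) ^ (s / p') * T1 with hG1
  set G2 := S2 / (K:ℝ) ^ (s' / p') + (K:ℝ) ^ (s' / p) * T2 with hG2
  have hG1p : 0 < G1 := add_pos_of_pos_of_nonneg (div_pos hS1p hr1)
    (mul_nonneg (Real.rpow_nonneg hK0.le _) hT1n)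
  have hG2p : 0 < G2 := add_pos_of_pos_of_nonneg (div_pos hS2p hr2)
    (mul_nonneg (Real.rpow_nonneg hK0.le _) hT2n)
  have hd1 : S1 + (K:ℝ) ^ s * T1 = (K:ℝ) ^ (s / p) * G1 := by
    rw [hG1, mul_add, mul_div_cancel₀ _ (ne_of_gt hr1), ← mul_assoc,
      ← Real.rpow_add hK0, e1]
  have hd2 : S2 + (K:ℝ) ^ s' * T2 = (K:ℝ) ^ (s' / p') * G2 := by
    rw [hG2, mul_add, mul_div_cancel₀ _ (ne_of_gt hr2), ← mul_assoc,
      ← Real.rpow_add hK0, e2]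
  rw [hd1, hd2, Real.mul_rpow hr1.le hG1p.le, Real.mul_rpow hr2.le hG2p.le,
    ← Real.rpow_mul hK0.le, ← Real.rpow_mul hK0.le, e4, e5,
    show (K:ℝ) ^ (1/p) * G1 ^ (1/s) * ((K:ℝ) ^ (1/p') * G2 ^ (1/s'))
      = ((K:ℝ) ^ (1/p) * (K:ℝ) ^ (1/p')) * (G1 ^ (1/s) * G2 ^ (1/s')) from by ring,
    ← Real.rpow_add hK0, hp'', Real.rpow_one, div_mul_cancel_left₀ hK0.ne']
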